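/- There exists a centrally symmetric orientable triangulated closed surface with exactly 18 vertices, 66 edges, 44 triangles, and Euler characteristic −4 (a triangulated orientable surface of genus 2). -/

import Mathlib

/-- A simple graph is a single cycle iff it is connected and 2-regular. -/
def IsSingleCycle {α : Type*} (G : SimpleGraph α) : Prop :=
  G.Connected ∧ ∀ a : α, (G.neighborSet a).ncard = 2

section Tri

variable {V : Type*} [DecidableEq V]

/-- The edges of a family of simplices: the 2-element subsets of its members. -/
def triEdges (K : Finset (Finset V)) : Finset (Finset V) :=
  K.biUnion fun T => T.powersetCard 2

/-- The underlying graph of a family of simplices. -/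
def cplxGraph (K : Finset (Finset V)) : SimpleGraph V where
  Adj a b := a ≠ b ∧ ∃ T ∈ K, a ∈ T ∧ b ∈ T
  symm := by
    constructor
    rintro a b ⟨h, T, hT, ha, hb⟩
    exact ⟨h.symm, T, hT, hb, ha⟩
  loopless := ⟨fun a h => h.1 rfl⟩

/-- The link graph of a vertex `v`: `a,b` are joined iff `{v,a,b}` is a simplex. -/
def linkGraph (K : Finset (Finset V)) (v : V) : SimpleGraph V where
  Adj a b := a ≠ b ∧ a ≠ v ∧ b ≠ v ∧ ({v, a, b} : Finset V) ∈ K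
  symm := by
    constructor
    rintro a b ⟨h1, h2, h3, h4⟩
    refine ⟨h1.symm, h3, h2, ?_⟩
    rwa [Finset.pair_comm b a]
  loopless := ⟨fun a h => h.1 rfl⟩

/-- Euler characteristic of a triangle family on vertex set `W`. -/
def eulerCharOn (W : Finset V) (K : Finset (Finset V)) : ℤ :=
  (W.card : ℤ) - ((triEdges K).card : ℤ) + (K.card : ℤ)

/-- `K` is a triangulated closed surface on the vertex set `W`. -/
def IsTriSurfaceOn (W : Finset V) (K : Finset (Finset V)) : Prop :=
  (∀ T ∈ K, T.card = 3 ∧ T ⊆ W) ∧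
  ((cplxGraph K).induce (W : Set V)).Connected ∧
  (∀ e ∈ triEdges K, (K.filter fun T => e ⊆ T).card = 2) ∧
  (∀ v ∈ W, IsSingleCycle ((linkGraph K v).induce ((cplxGraph K).neighborSet v)))

/-- `K` is centrally symmetric on vertex set `W` under the involution `σ`. -/
def IsCSOn (W : Finset V) (K : Finset (Finset V)) (σ : V → V) : Prop :=
  Set.MapsTo σ (W : Set V) (W : Set V) ∧
  (∀ v ∈ W, σ (σ v) = v) ∧
  (∀ T ∈ K, T.image σ ∈ K) ∧
  (∀ v ∈ W, σ v ≠ v) ∧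
  (∀ e ∈ triEdges K, e.image σ ≠ e) ∧
  (∀ T ∈ K, T.image σ ≠ T)

/-- Orientability of a triangulated surface. -/
def IsOrientableTri (K : Finset (Finset V)) : Prop :=
  ∃ ori : Finset V → V → V → Bool,
    (∀ T ∈ K, ∀ a ∈ T, ∀ b ∈ T, a ≠ b → ori T a b = !ori T b a) ∧
    (∀ T ∈ K, ∀ a b c : V, a ≠ b → b ≠ c → a ≠ c → T = {a, b, c} → ori T a b = ori T b c) ∧
    (∀ T ∈ K, ∀ T' ∈ K, T ≠ T' → ∀ a b : V, a ≠ b → a ∈ T → b ∈ T → a ∈ T' → b ∈ T' →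
      ori T a b = ori T' b a)

end Tri

/-!
The surface is an explicit list of 44 coherently oriented triangles on `Fin 18`, invariant
under the antipodal map `v ↦ v + 9`. When every directed edge of a list of oriented triangles
occurs exactly once and so does its reverse, each edge lies in exactly two triangles, so every
link is 2-regular, `2 f₁ = 3 f₂`, and the directed edges orient the surface. A link is then a
single cycle as soon as turning around the vertex (from the directed edge `(v, a)` to the third
vertex of its triangle) visits every neighbour. The antipodal map fixes no triangle since a
fixed-point-free involution fixes no set of odd size. What remains are finite checks on the
list, done by the kernel.
-/

namespace SimpleGraph

variable {α : Type*} {G : SimpleGraph α}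

lemma connected_of_isChain {w : List α} (hne : w ≠ []) (hw : w.IsChain G.Adj)
    (hcover : ∀ x, x ∈ w) : G.Connected := by
  have : Nonempty α := ⟨w.head hne⟩
  refine (connected_iff_exists_forall_reachable _).mpr ⟨w.head hne, fun x => ?_⟩
  exact hw.induction (G.Reachable (w.head hne)) w (fun _ _ hxy hx => hx.trans hxy.reachable)
    (fun _ => Reachable.refl _) x (hcover x)

lemma induce_connected_of_iterate {s : Set α} {r : α} (f : α → α) (hr : r ∈ s)
    (hf : ∀ x ∈ s, f x ∈ s ∧ G.Adj x (f x)) (hcover : ∀ x ∈ s, ∃ k, f^[k] r = x) :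
    (G.induce s).Connected := by
  have hreach : ∀ k, ∃ h : f^[k] r ∈ s, (G.induce s).Reachable ⟨r, hr⟩ ⟨_, h⟩ := by
    intro k
    induction k with
    | zero => exact ⟨hr, Reachable.refl _⟩
    | succ k ih =>
      obtain ⟨hk, hreach⟩ := ih
      simp only [Function.iterate_succ_apply']
      exact ⟨(hf _ hk).1, hreach.trans (Adj.reachable (hf _ hk).2)⟩
  have : Nonempty s := ⟨⟨r, hr⟩⟩
  refine (connected_iff_exists_forall_reachable _).mpr ⟨⟨r, hr⟩, fun ⟨x, hx⟩ => ?_⟩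
  obtain ⟨k, rfl⟩ := hcover x hx
  exact (hreach k).2

end SimpleGraph

lemma Finset.image_ne_self_of_odd_card {α : Type*} [DecidableEq α] {σ : α → α}
    (hσ : Function.Involutive σ) (hfix : ∀ v, σ v ≠ v) {T : Finset α} (hT : Odd T.card) :
    T.image σ ≠ T := by
  intro himage
  have hmem : ∀ a ∈ T, σ a ∈ T := fun a ha => himage ▸ Finset.mem_image_of_mem σ ha
  have hsum : ∑ _ ∈ T, (1 : ZMod 2) = 0 :=
    Finset.sum_involution (fun a _ => σ a) (fun _ _ => by decide) (fun a _ _ => hfix a) hmem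
      (fun a _ => hσ a)
  rw [Finset.sum_const, nsmul_one, ZMod.natCast_eq_zero_iff_even] at hsum
  exact Nat.not_even_iff_odd.mpr hT hsum

lemma Finset.exists_eq_insert_of_card_eq_three {α : Type*} [DecidableEq α] {T : Finset α}
    (hT : T.card = 3) {v x : α} (hvx : v ≠ x) (hsub : {v, x} ⊆ T) :
    ∃ b, b ≠ v ∧ b ≠ x ∧ T = {v, x, b} := by
  have hcard : (T \ {v, x}).card = 1 := by
    rw [Finset.card_sdiff_of_subset hsub, hT, Finset.card_pair hvx]
  obtain ⟨b, hb⟩ := Finset.card_eq_one.mp hcard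
  have hbT : b ∈ T \ {v, x} := hb ▸ Finset.mem_singleton_self b
  simp only [Finset.mem_sdiff, Finset.mem_insert, Finset.mem_singleton, not_or] at hbT
  refine ⟨b, hbT.2.1, hbT.2.2, ?_⟩
  ext y
  rw [← Finset.union_sdiff_of_subset hsub, hb]
  simp only [Finset.mem_union, Finset.mem_insert, Finset.mem_singleton, or_assoc]

section PseudoSurface

variable {V : Type*} [DecidableEq V] {K : Finset (Finset V)}

lemma two_mul_card_triEdges (hK : ∀ T ∈ K, T.card = 3)
    (hedge : ∀ e ∈ triEdges K, (K.filter fun T => e ⊆ T).card = 2) :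
    2 * (triEdges K).card = 3 * K.card := by
  have hbelow : ∀ T ∈ K, ((triEdges K).filter fun e => e ⊆ T).card = 3 := by
    intro T hT
    have : ((triEdges K).filter fun e => e ⊆ T) = T.powersetCard 2 := by
      ext e
      simp only [Finset.mem_filter, Finset.mem_powersetCard, triEdges, Finset.mem_biUnion]
      exact ⟨fun ⟨⟨_, _, he⟩, hsub⟩ => ⟨hsub, he.2⟩, fun he => ⟨⟨T, hT, he⟩, he.1⟩⟩
    rw [this, Finset.card_powersetCard, hK T hT]
    rfl
  rw [mul_comm, Finset.card_mul_eq_card_mul (· ⊆ ·) hedge hbelow, mul_comm]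

lemma ncard_neighborSet_linkGraph (hK : ∀ T ∈ K, T.card = 3) {v x : V} (hvx : v ≠ x) :
    ((linkGraph K v).neighborSet x).ncard = (K.filter fun T => {v, x} ⊆ T).card := by
  rw [← Set.ncard_coe_finset]
  refine Set.ncard_congr (fun b _ => {v, x, b}) ?_ ?_ ?_
  · rintro b ⟨-, -, -, hT⟩
    simpa [Finset.insert_subset_iff] using hT
  · rintro b b' ⟨hxb, -, hbv, -⟩ - h
    have hb : b ∈ ({v, x, b'} : Finset V) := h ▸ by simp
    simp only [Finset.mem_insert, Finset.mem_singleton] at hb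
    grind
  · intro T hT
    rw [Finset.coe_filter] at hT
    obtain ⟨b, hbv, hbx, rfl⟩ := Finset.exists_eq_insert_of_card_eq_three (hK T hT.1) hvx hT.2
    exact ⟨b, ⟨Ne.symm hbx, Ne.symm hvx, hbv, hT.1⟩, rfl⟩

lemma ncard_neighborSet_induce_linkGraph (hK : ∀ T ∈ K, T.card = 3) {v : V}
    (x : (cplxGraph K).neighborSet v) :
    (((linkGraph K v).induce ((cplxGraph K).neighborSet v)).neighborSet x).ncard =
      (K.filter fun T => {v, x.1} ⊆ T).card := by
  have hsub :
      (linkGraph K v).neighborSet x ⊆ Set.range ((↑) : (cplxGraph K).neighborSet v → V) := by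
    rintro b ⟨-, -, hbv, hT⟩
    exact ⟨⟨b, Ne.symm hbv, _, hT, by simp, by simp⟩, rfl⟩
  rw [← ncard_neighborSet_linkGraph hK x.2.1,
    ← Set.ncard_preimage_of_injective_subset_range Subtype.val_injective hsub]
  rfl

end PseudoSurface

section OrientedTriangle

variable {V : Type*}

def dirEdges (t : V × V × V) : List (V × V) := [(t.1, t.2.1), (t.2.1, t.2.2), (t.2.2, t.1)]

def rotations (t : V × V × V) : List (V × V × V) :=
  [t, (t.2.1, t.2.2, t.1), (t.2.2, t.1, t.2.1)]

def IsNondegenerate (t : V × V × V) : Prop := t.1 ≠ t.2.1 ∧ t.2.1 ≠ t.2.2 ∧ t.1 ≠ t.2.2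

variable {t : V × V × V} {a b c : V}

lemma ne_of_mem_dirEdges (ht : IsNondegenerate t) (h : (a, b) ∈ dirEdges t) : a ≠ b := by
  obtain ⟨x, y, z⟩ := t
  simp only [IsNondegenerate] at ht
  simp only [dirEdges, List.mem_cons, Prod.mk.injEq, List.not_mem_nil] at h
  grind

lemma swap_not_mem_dirEdges (ht : IsNondegenerate t) (h : (a, b) ∈ dirEdges t) :
    (b, a) ∉ dirEdges t := by
  obtain ⟨x, y, z⟩ := t
  simp only [IsNondegenerate] at ht
  simp only [dirEdges, List.mem_cons, Prod.mk.injEq, List.not_mem_nil] at h ⊢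
  grind

lemma exists_mem_rotations_of_mem_dirEdges (h : (a, b) ∈ dirEdges t) :
    ∃ c, (a, b, c) ∈ rotations t := by
  obtain ⟨x, y, z⟩ := t
  simp only [dirEdges, List.mem_cons, Prod.mk.injEq, List.not_mem_nil] at h
  simp only [rotations, List.mem_cons, Prod.mk.injEq, List.not_mem_nil]
  grind

lemma IsNondegenerate.of_mem_rotations {r : V × V × V} (ht : IsNondegenerate t)
    (hr : r ∈ rotations t) : IsNondegenerate r := by
  obtain ⟨x, y, z⟩ := t
  simp only [rotations, List.mem_cons, List.not_mem_nil, or_false] at hr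
  simp only [IsNondegenerate] at ht
  rcases hr with rfl | rfl | rfl <;> simp only [IsNondegenerate] <;> grind

variable [DecidableEq V]

instance : DecidablePred (IsNondegenerate (V := V)) :=
  fun _ => inferInstanceAs (Decidable (_ ∧ _ ∧ _))

def vertexSet (t : V × V × V) : Finset V := {t.1, t.2.1, t.2.2}

def trianglesOf (L : List (V × V × V)) : Finset (Finset V) := (L.map vertexSet).toFinset

/-- The successor of `a` in the cyclically ordered link of `v`: the third vertex of the
triangle containing the directed edge `(v, a)`. -/
def linkSucc (L : List (V × V × V)) (v a : V) : V :=
  (((L.flatMap rotations).find? fun r => r.1 = v ∧ r.2.1 = a).map (·.2.2)).getD a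

lemma mem_trianglesOf {L : List (V × V × V)} {T : Finset V} :
    T ∈ trianglesOf L ↔ ∃ t ∈ L, vertexSet t = T := by
  simp [trianglesOf]

lemma card_vertexSet (ht : IsNondegenerate t) : (vertexSet t).card = 3 :=
  Finset.card_eq_three.mpr ⟨_, _, _, ht.1, ht.2.2, ht.2.1, rfl⟩

lemma mem_vertexSet_of_mem_dirEdges (h : (a, b) ∈ dirEdges t) :
    a ∈ vertexSet t ∧ b ∈ vertexSet t := by
  obtain ⟨x, y, z⟩ := t
  simp only [dirEdges, List.mem_cons, Prod.mk.injEq, List.not_mem_nil] at h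
  simp only [vertexSet, Finset.mem_insert, Finset.mem_singleton]
  grind

lemma mem_dirEdges_or_swap (ha : a ∈ vertexSet t)
    (hb : b ∈ vertexSet t) (hab : a ≠ b) : (a, b) ∈ dirEdges t ∨ (b, a) ∈ dirEdges t := by
  obtain ⟨x, y, z⟩ := t
  simp only [vertexSet, Finset.mem_insert, Finset.mem_singleton] at ha hb
  simp only [dirEdges, List.mem_cons, Prod.mk.injEq, List.not_mem_nil]
  grind

lemma mem_dirEdges_rotate (hc : c ∈ vertexSet t) (hca : c ≠ a) (hcb : c ≠ b)
    (h : (a, b) ∈ dirEdges t) : (b, c) ∈ dirEdges t := by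
  obtain ⟨x, y, z⟩ := t
  simp only [vertexSet, Finset.mem_insert, Finset.mem_singleton] at hc
  simp only [dirEdges, List.mem_cons, Prod.mk.injEq, List.not_mem_nil] at h ⊢
  grind

lemma vertexSet_eq_of_mem_rotations {r : V × V × V} (hr : r ∈ rotations t) :
    vertexSet r = vertexSet t := by
  obtain ⟨x, y, z⟩ := t
  simp only [rotations, List.mem_cons, List.not_mem_nil, or_false] at hr
  ext
  rcases hr with rfl | rfl | rfl <;> simp only [vertexSet, Finset.mem_insert,
    Finset.mem_singleton] <;> tauto

end OrientedTriangle

structure IsCoherentlyOriented {V : Type*} [DecidableEq V] (L : List (V × V × V)) : Prop where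
  nondegenerate : ∀ t ∈ L, IsNondegenerate t
  nodup_vertexSet : (L.map vertexSet).Nodup
  nodup_dirEdges : (L.flatMap dirEdges).Nodup
  swap_mem_dirEdges : ∀ p ∈ L.flatMap dirEdges, p.swap ∈ L.flatMap dirEdges

def orientation {V : Type*} [DecidableEq V] (L : List (V × V × V)) (T : Finset V) (a b : V) :
    Bool :=
  L.any fun t => vertexSet t = T ∧ (a, b) ∈ dirEdges t

namespace IsCoherentlyOriented

variable {V : Type*} [DecidableEq V] {L : List (V × V × V)} {t t' : V × V × V} {v a b : V}

lemma eq_of_mem_dirEdges (hL : IsCoherentlyOriented L) {p : V × V} (ht : t ∈ L) (ht' : t' ∈ L)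
    (hp : p ∈ dirEdges t) (hp' : p ∈ dirEdges t') : t = t' := by
  by_contra hne
  have : Std.Symm (Function.onFun List.Disjoint (@dirEdges V)) := ⟨fun _ _ h => h.symm⟩
  exact (List.nodup_flatMap.mp hL.nodup_dirEdges).2.forall ht ht' hne hp hp'

lemma eq_of_vertexSet_eq (hL : IsCoherentlyOriented L) (ht : t ∈ L) (ht' : t' ∈ L)
    (h : vertexSet t = vertexSet t') : t = t' :=
  List.inj_on_of_nodup_map hL.nodup_vertexSet ht ht' h

lemma cplxGraph_adj_iff (hL : IsCoherentlyOriented L) :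
    (cplxGraph (trianglesOf L)).Adj a b ↔ (a, b) ∈ L.flatMap dirEdges := by
  constructor
  · rintro ⟨hab, T, hT, ha, hb⟩
    obtain ⟨t, ht, rfl⟩ := mem_trianglesOf.mp hT
    rcases mem_dirEdges_or_swap ha hb hab with h | h
    · exact List.mem_flatMap.mpr ⟨t, ht, h⟩
    · exact hL.swap_mem_dirEdges _ (List.mem_flatMap.mpr ⟨t, ht, h⟩)
  · intro h
    obtain ⟨t, ht, hab⟩ := List.mem_flatMap.mp h
    exact ⟨ne_of_mem_dirEdges (hL.nondegenerate t ht) hab, vertexSet t,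
      mem_trianglesOf.mpr ⟨t, ht, rfl⟩, mem_vertexSet_of_mem_dirEdges hab⟩

lemma mem_triEdges_iff (hL : IsCoherentlyOriented L) {e : Finset V} :
    e ∈ triEdges (trianglesOf L) ↔ ∃ p ∈ L.flatMap dirEdges, e = {p.1, p.2} := by
  constructor
  · intro he
    obtain ⟨T, hT, he⟩ := Finset.mem_biUnion.mp he
    obtain ⟨hsub, hcard⟩ := Finset.mem_powersetCard.mp he
    obtain ⟨a, b, hab, rfl⟩ := Finset.card_eq_two.mp hcard
    have hadj : (cplxGraph (trianglesOf L)).Adj a b :=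
      ⟨hab, T, hT, hsub (by simp), hsub (by simp)⟩
    exact ⟨(a, b), hL.cplxGraph_adj_iff.mp hadj, rfl⟩
  · rintro ⟨⟨a, b⟩, hp, rfl⟩
    obtain ⟨hab, T, hT, ha, hb⟩ := hL.cplxGraph_adj_iff.mpr hp
    refine Finset.mem_biUnion.mpr ⟨T, hT, Finset.mem_powersetCard.mpr ⟨?_, Finset.card_pair hab⟩⟩
    simp [Finset.insert_subset_iff, ha, hb]

lemma card_filter_subset_eq_two (hL : IsCoherentlyOriented L) {e : Finset V}
    (he : e ∈ triEdges (trianglesOf L)) :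
    ((trianglesOf L).filter fun T => e ⊆ T).card = 2 := by
  obtain ⟨⟨a, b⟩, hp, rfl⟩ := hL.mem_triEdges_iff.mp he
  obtain ⟨t₁, ht₁, hab⟩ := List.mem_flatMap.mp hp
  obtain ⟨t₂, ht₂, hba⟩ := List.mem_flatMap.mp (hL.swap_mem_dirEdges _ hp)
  have hne : vertexSet t₁ ≠ vertexSet t₂ := fun h =>
    swap_not_mem_dirEdges (hL.nondegenerate t₁ ht₁) hab (hL.eq_of_vertexSet_eq ht₁ ht₂ h ▸ hba)
  suffices (trianglesOf L).filter (fun T => {a, b} ⊆ T) = {vertexSet t₁, vertexSet t₂} by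
    rw [this, Finset.card_pair hne]
  ext T
  simp only [Finset.mem_filter, Finset.mem_insert, Finset.mem_singleton, Finset.insert_subset_iff,
    Finset.singleton_subset_iff, mem_trianglesOf]
  constructor
  · rintro ⟨⟨t, ht, rfl⟩, ha, hb⟩
    rcases mem_dirEdges_or_swap ha hb
        (ne_of_mem_dirEdges (hL.nondegenerate t₁ ht₁) hab) with h | h
    · exact Or.inl (congrArg vertexSet (hL.eq_of_mem_dirEdges ht ht₁ h hab))
    · exact Or.inr (congrArg vertexSet (hL.eq_of_mem_dirEdges ht ht₂ h hba))
  · rintro (rfl | rfl)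
    · exact ⟨⟨t₁, ht₁, rfl⟩, mem_vertexSet_of_mem_dirEdges hab⟩
    · exact ⟨⟨t₂, ht₂, rfl⟩, (mem_vertexSet_of_mem_dirEdges hba).symm⟩

lemma orientation_vertexSet (hL : IsCoherentlyOriented L) (ht : t ∈ L) :
    orientation L (vertexSet t) a b = decide ((a, b) ∈ dirEdges t) := by
  rw [Bool.eq_iff_iff, orientation, List.any_eq_true, decide_eq_true_iff]
  constructor
  · rintro ⟨t', ht', h⟩
    obtain ⟨hT, hab⟩ := of_decide_eq_true h
    exact hL.eq_of_vertexSet_eq ht' ht hT ▸ hab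
  · exact fun hab => ⟨t, ht, decide_eq_true ⟨rfl, hab⟩⟩

lemma isOrientableTri (hL : IsCoherentlyOriented L) : IsOrientableTri (trianglesOf L) := by
  refine ⟨orientation L, ?_, ?_, ?_⟩
  · intro T hT a ha b hb hab
    obtain ⟨t, ht, rfl⟩ := mem_trianglesOf.mp hT
    rw [hL.orientation_vertexSet ht, hL.orientation_vertexSet ht]
    rcases mem_dirEdges_or_swap ha hb hab with h | h <;>
      simp [h, swap_not_mem_dirEdges (hL.nondegenerate t ht) h]
  · intro T hT a b c hab hbc hac hT'
    obtain ⟨t, ht, rfl⟩ := mem_trianglesOf.mp hT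
    have hmem : a ∈ vertexSet t ∧ b ∈ vertexSet t ∧ c ∈ vertexSet t := by simp [hT']
    rw [hL.orientation_vertexSet ht, hL.orientation_vertexSet ht, decide_eq_decide]
    exact ⟨mem_dirEdges_rotate hmem.2.2 hac.symm hbc.symm,
      fun h => mem_dirEdges_rotate hmem.2.1 hbc hab.symm
        (mem_dirEdges_rotate hmem.1 hab hac h)⟩
  · intro T hT T' hT' hTT' a b hab ha hb ha' hb'
    obtain ⟨t, ht, rfl⟩ := mem_trianglesOf.mp hT
    obtain ⟨t', ht', rfl⟩ := mem_trianglesOf.mp hT'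
    have hne : t ≠ t' := fun h => hTT' (h ▸ rfl)
    rw [hL.orientation_vertexSet ht, hL.orientation_vertexSet ht', decide_eq_decide]
    constructor
    · intro h
      refine (mem_dirEdges_or_swap hb' ha' hab.symm).resolve_right ?_
      exact fun h' => hne (hL.eq_of_mem_dirEdges ht ht' h h')
    · intro h
      refine (mem_dirEdges_or_swap ha hb hab).resolve_right ?_
      exact fun h' => hne (hL.eq_of_mem_dirEdges ht ht' h' h)

lemma card_trianglesOf (hL : IsCoherentlyOriented L) : (trianglesOf L).card = L.length := by
  rw [trianglesOf, List.toFinset_card_of_nodup hL.nodup_vertexSet, List.length_map]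

lemma exists_vertexSet_eq_linkSucc (hL : IsCoherentlyOriented L)
    (h : (v, a) ∈ L.flatMap dirEdges) :
    ∃ t ∈ L, vertexSet t = {v, a, linkSucc L v a} ∧
      IsNondegenerate (v, a, linkSucc L v a) := by
  obtain ⟨t, ht, hva⟩ := List.mem_flatMap.mp h
  obtain ⟨c, hc⟩ := exists_mem_rotations_of_mem_dirEdges hva
  have hsome : ((L.flatMap rotations).find? fun r => r.1 = v ∧ r.2.1 = a).isSome :=
    List.find?_isSome.mpr ⟨(v, a, c), List.mem_flatMap.mpr ⟨t, ht, hc⟩, by simp⟩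
  obtain ⟨⟨x, y, z⟩, hr⟩ := Option.isSome_iff_exists.mp hsome
  obtain ⟨rfl, rfl⟩ : x = v ∧ y = a := by simpa using List.find?_some hr
  obtain ⟨t', ht', hrt'⟩ := List.mem_flatMap.mp (List.mem_of_find?_eq_some hr)
  have hsucc : linkSucc L x y = z := by rw [linkSucc, hr]; rfl
  rw [hsucc]
  exact ⟨t', ht', (vertexSet_eq_of_mem_rotations hrt').symm,
    (hL.nondegenerate t' ht').of_mem_rotations hrt'⟩

lemma linkGraph_induce_connected (hL : IsCoherentlyOriented L) {r : V}
    (hr : (v, r) ∈ L.flatMap dirEdges)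
    (hcover : ∀ x, (v, x) ∈ L.flatMap dirEdges → ∃ k, (linkSucc L v)^[k] r = x) :
    ((linkGraph (trianglesOf L) v).induce
      ((cplxGraph (trianglesOf L)).neighborSet v)).Connected := by
  refine SimpleGraph.induce_connected_of_iterate (linkSucc L v) (hL.cplxGraph_adj_iff.mpr hr)
    (fun x hx => ?_) (fun x hx => hcover x (hL.cplxGraph_adj_iff.mp hx))
  obtain ⟨t, ht, hT, hnd⟩ := hL.exists_vertexSet_eq_linkSucc (hL.cplxGraph_adj_iff.mp hx)
  have hK : {v, x, linkSucc L v x} ∈ trianglesOf L := mem_trianglesOf.mpr ⟨t, ht, hT⟩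
  exact ⟨⟨hnd.2.2, _, hK, by simp, by simp⟩, hnd.2.1, hnd.1.symm, hnd.2.2.symm, hK⟩

lemma isTriSurfaceOn (hL : IsCoherentlyOriented L) {W : Finset V}
    (hW : ∀ t ∈ L, vertexSet t ⊆ W)
    (hconn : ((cplxGraph (trianglesOf L)).induce (W : Set V)).Connected)
    (hlink : ∀ v ∈ W, ∃ r, (v, r) ∈ L.flatMap dirEdges ∧
      ∀ x, (v, x) ∈ L.flatMap dirEdges → ∃ k, (linkSucc L v)^[k] r = x) :
    IsTriSurfaceOn W (trianglesOf L) := by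
  have hK : ∀ T ∈ trianglesOf L, T.card = 3 := by
    intro T hT
    obtain ⟨t, ht, rfl⟩ := mem_trianglesOf.mp hT
    exact card_vertexSet (hL.nondegenerate t ht)
  refine ⟨fun T hT => ⟨hK T hT, ?_⟩, hconn, fun e he => hL.card_filter_subset_eq_two he,
    fun v hv => ?_⟩
  · obtain ⟨t, ht, rfl⟩ := mem_trianglesOf.mp hT
    exact hW t ht
  · obtain ⟨r, hr, hcover⟩ := hlink v hv
    refine ⟨hL.linkGraph_induce_connected hr hcover, fun x => ?_⟩
    rw [ncard_neighborSet_induce_linkGraph hK]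
    exact hL.card_filter_subset_eq_two
      (hL.mem_triEdges_iff.mpr ⟨(v, x), hL.cplxGraph_adj_iff.mp x.2, rfl⟩)

lemma isCSOn [Fintype V] (hL : IsCoherentlyOriented L) {σ : V → V}
    (hσ : Function.Involutive σ) (hfix : ∀ v, σ v ≠ v)
    (himage : ∀ t ∈ L, (vertexSet t).image σ ∈ L.map vertexSet)
    (hantipodal : ∀ p ∈ L.flatMap dirEdges, σ p.1 ≠ p.2) :
    IsCSOn Finset.univ (trianglesOf L) σ := by
  refine ⟨fun v _ => Finset.mem_coe.mpr (Finset.mem_univ _), fun v _ => hσ v, fun T hT => ?_,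
    fun v _ => hfix v, fun e he => ?_, fun T hT => ?_⟩
  · obtain ⟨t, ht, rfl⟩ := mem_trianglesOf.mp hT
    exact List.mem_toFinset.mpr (himage t ht)
  · obtain ⟨⟨a, b⟩, hp, rfl⟩ := hL.mem_triEdges_iff.mp he
    intro h
    have ha : σ a ∈ ({a, b} : Finset V) := h ▸ Finset.mem_image_of_mem σ (by simp)
    rcases Finset.mem_insert.mp ha with ha | ha
    · exact hfix a ha
    · exact hantipodal _ hp (Finset.mem_singleton.mp ha)
  · obtain ⟨t, ht, rfl⟩ := mem_trianglesOf.mp hT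
    refine Finset.image_ne_self_of_odd_card hσ hfix ?_
    rw [card_vertexSet (hL.nondegenerate t ht)]
    decide

end IsCoherentlyOriented

/-- `decide` on `∀ a ∈ l, p a` would enumerate the whole type of `a` when it is a `Fintype`;
this walks the list instead. -/
lemma List.forall_mem_of_all_decide {α : Type*} {l : List α} {p : α → Prop} [DecidablePred p]
    (h : (l.all fun a => decide (p a)) = true) : ∀ a ∈ l, p a := by
  simpa using h

/-- Half of the oriented triangles; the other half is their image under `v ↦ v + 9`, which
reverses the orientation. -/
def genusTwoHalf : List (Fin 18 × Fin 18 × Fin 18) :=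
  [(0, 2, 4), (0, 4, 14), (0, 10, 2), (0, 12, 10), (0, 14, 12), (1, 5, 7), (1, 7, 17), (1, 11, 5),
    (1, 13, 3), (1, 15, 13), (1, 17, 15), (2, 3, 7), (2, 6, 4), (2, 7, 6), (2, 8, 3), (2, 14, 8),
    (3, 6, 5), (3, 8, 6), (3, 13, 7), (4, 8, 14), (4, 16, 8), (5, 6, 7)]

def genusTwoSurface : List (Fin 18 × Fin 18 × Fin 18) :=
  genusTwoHalf ++ genusTwoHalf.map fun t => (t.1 + 9, t.2.2 + 9, t.2.1 + 9)

lemma isCoherentlyOriented_genusTwoSurface : IsCoherentlyOriented genusTwoSurface where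
  nondegenerate := List.forall_mem_of_all_decide (by decide +kernel)
  nodup_vertexSet := by decide +kernel
  nodup_dirEdges := by decide +kernel
  swap_mem_dirEdges := List.forall_mem_of_all_decide (by decide +kernel)

lemma genusTwoSurface_connected :
    ((cplxGraph (trianglesOf genusTwoSurface)).induce
      (Finset.univ : Finset (Fin 18))).Connected := by
  rw [Finset.coe_univ, (SimpleGraph.induceUnivIso _).connected_iff]
  -- a Hamiltonian cycle of the 1-skeleton
  refine SimpleGraph.connected_of_isChain
    (w := [0, 2, 3, 1, 5, 6, 4, 8, 10, 12, 11, 9, 13, 7, 17, 15, 16, 14]) (by simp) ?_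
    (by decide +kernel)
  refine List.IsChain.imp (fun _ _ => isCoherentlyOriented_genusTwoSurface.cplxGraph_adj_iff.mpr) ?_
  decide +kernel

lemma genusTwoSurface_link (v : Fin 18) : ∃ r, (v, r) ∈ genusTwoSurface.flatMap dirEdges ∧
    ∀ x, (v, x) ∈ genusTwoSurface.flatMap dirEdges →
      ∃ k, (linkSucc genusTwoSurface v)^[k] r = x := by
  have hcheck : ∀ v : Fin 18, ∃ r, (v, r) ∈ genusTwoSurface.flatMap dirEdges ∧
      ∀ x, (v, x) ∈ genusTwoSurface.flatMap dirEdges →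
        ∃ k < 8, (linkSucc genusTwoSurface v)^[k] r = x := by
    -- no vertex has more than 8 neighbours
    decide +kernel
  obtain ⟨r, hr, hcover⟩ := hcheck v
  exact ⟨r, hr, fun x hx => (hcover x hx).imp fun _ => And.right⟩

lemma genusTwoSurface_image_add_nine :
    ∀ t ∈ genusTwoSurface, (vertexSet t).image (· + 9) ∈ genusTwoSurface.map vertexSet :=
  List.forall_mem_of_all_decide (by decide +kernel)

lemma genusTwoSurface_add_nine_ne : ∀ p ∈ genusTwoSurface.flatMap dirEdges, p.1 + 9 ≠ p.2 :=
  List.forall_mem_of_all_decide (by decide +kernel)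

lemma add_nine_involutive : Function.Involutive fun v : Fin 18 => v + 9 := fun v => by
  show v + 9 + 9 = v
  rw [add_assoc, show (9 : Fin 18) + 9 = 0 by decide, add_zero]

lemma add_nine_ne_self (v : Fin 18) : v + 9 ≠ v := fun h =>
  absurd (add_eq_left.mp h) (by decide)

/-- There exists a centrally symmetric orientable triangulated closed surface with
exactly 18 vertices, 66 edges, 44 triangles and Euler characteristic -4 (genus 2). -/
theorem exists_CS_orientable_genus_two_triangulation :
    ∃ K : Finset (Finset (Fin 18)),
      IsTriSurfaceOn Finset.univ K ∧
      IsOrientableTri K ∧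
      (∃ σ : Fin 18 → Fin 18, IsCSOn Finset.univ K σ) ∧
      (triEdges K).card = 66 ∧ K.card = 44 ∧
      eulerCharOn Finset.univ K = -4 := by
  have hL := isCoherentlyOriented_genusTwoSurface
  have hS : IsTriSurfaceOn Finset.univ (trianglesOf genusTwoSurface) :=
    hL.isTriSurfaceOn (fun _ _ => Finset.subset_univ _) genusTwoSurface_connected
      fun v _ => genusTwoSurface_link v
  have hK : (trianglesOf genusTwoSurface).card = 44 := hL.card_trianglesOf
  have hE : (triEdges (trianglesOf genusTwoSurface)).card = 66 := by
    have := two_mul_card_triEdges (fun T hT => (hS.1 T hT).1) hS.2.2.1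
    omega
  refine ⟨_, hS, hL.isOrientableTri, ⟨(· + 9), hL.isCSOn add_nine_involutive add_nine_ne_self
    genusTwoSurface_image_add_nine genusTwoSurface_add_nine_ne⟩, hE, hK, ?_⟩
  rw [eulerCharOn, hE, hK]
  rfl
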